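/- arXiv:2602.17920 — 2 statements merged into one kernel-verified Lean document; each statement's English description precedes it below -/
import Mathlib

section
/- Let Γ ⊆ E, let P be a ν-partition of G with boundary ∂P, and suppose there exists Γ̃ ⊆ ∂P such that σ^Γ is switching equivalent to σ^{Γ̃}. Then for every α ∈ ℝ^{∂P} with all entries positive, λ_ν(Γ) ≤ Λ(P, α), where λ_ν(Γ) is the ν-th smallest eigenvalue of L^Γ counted with multiplicity. -/
open Matrix Finset

noncomputable section

variable {V : Type*}

/-- The signed Laplacian of the weighted graph `(G,w)` with signature `σ`. -/
def signedLaplacian [Fintype V] [DecidableEq V] (G : SimpleGraph V) [DecidableRel G.Adj]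
    (w σ : V → V → ℝ) : Matrix V V ℝ :=
  Matrix.of fun i j =>
    if i = j then ∑ k, if G.Adj i k then w i k else 0
    else if G.Adj i j then -(σ i j * w i j) else 0

/-- The `n`-th smallest eigenvalue (1-based, counted with multiplicity) of a real
symmetric matrix; junk value `0` if the matrix is not Hermitian or `n` is out of range. -/
def nthEigenvalue [Fintype V] [DecidableEq V] (A : Matrix V V ℝ) (n : ℕ) : ℝ :=
  if h : A.IsHermitian ∧ n - 1 < Fintype.card V then
    let f : Fin (Fintype.card V) → ℝ := fun i => h.1.eigenvalues ((Fintype.equivFin V).symm i)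
    f (Tuple.sort f ⟨n - 1, h.2⟩)
  else 0

/-- `μ` is a simple eigenvalue of `A`: its eigenspace is one-dimensional. -/
def IsSimpleEigenvalue [Fintype V] [DecidableEq V] (A : Matrix V V ℝ) (μ : ℝ) : Prop :=
  Module.finrank ℝ (Module.End.eigenspace (Matrix.toLin' A) μ) = 1

/-- The nodal set of `u` with respect to the signature `σ`, as a set of (unordered) edges. -/
def nodalEdges (G : SimpleGraph V) (σ : V → V → ℝ) (u : V → ℝ) : Set (Sym2 V) :=
  {e | ∃ i j, e = s(i, j) ∧ G.Adj i j ∧ u i * σ i j * u j < 0}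

/-- The number of nodal domains of `u` on `(G,σ)`: the number of connected components
of the spanning subgraph obtained by deleting the nodal set. -/
def nodalCount (G : SimpleGraph V) (σ : V → V → ℝ) (u : V → ℝ) : ℕ :=
  Nat.card (G.deleteEdges (nodalEdges G σ u)).ConnectedComponent

/-- `(G,σ)` is balanced: every cycle has positive sign. -/
def IsBalanced (G : SimpleGraph V) (σ : V → V → ℝ) : Prop :=
  ∀ ⦃v : V⦄ (p : G.Walk v v), p.IsCycle →
    0 < (p.darts.map fun d => σ d.toProd.1 d.toProd.2).prod

/-- The matrix `B_{ij}(a)`. -/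
def Bmat [DecidableEq V] (i j : V) (a : ℝ) : Matrix V V ℝ :=
  Matrix.of fun x y =>
    if x = i ∧ y = i then a
    else if x = j ∧ y = j then a⁻¹
    else if (x = i ∧ y = j) ∨ (x = j ∧ y = i) then -1
    else 0

/-- The signature `σ^{∂P}` determined by the partition `P`. -/
def partSgn {ν : ℕ} (P : V → Fin ν) (i j : V) : ℝ :=
  if P i = P j then 1 else -1

/-- `L^{∂P}(P,α)`: the partition Laplacian perturbed by the rank-one parameter matrices
on the oriented boundary edges `O`. -/
def paramMatrix [Fintype V] [DecidableEq V] (G : SimpleGraph V) [DecidableRel G.Adj]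
    (w : V → V → ℝ) {ν : ℕ} (P : V → Fin ν) (O : Finset (V × V)) (α : V × V → ℝ) :
    Matrix V V ℝ :=
  signedLaplacian G w (partSgn P) + ∑ p ∈ O, w p.1 p.2 • Bmat p.1 p.2 (α p)

/-- The principal submatrix of `M` on the `k`-th part of the partition `P`. -/
def blockMatrix {ν : ℕ} (M : Matrix V V ℝ) (P : V → Fin ν) (k : Fin ν) :
    Matrix {v : V // P v = k} {v : V // P v = k} ℝ :=
  M.submatrix Subtype.val Subtype.val

/-- `λ₁(G_k, α)`: the smallest eigenvalue of the block of `L^{∂P}(P,α)` on part `k`. -/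
def lam1Block [Fintype V] [DecidableEq V] {ν : ℕ} (M : Matrix V V ℝ) (P : V → Fin ν)
    (k : Fin ν) : ℝ :=
  nthEigenvalue (blockMatrix M P k) 1

/-- The partition energy `Λ(P, α) = max_k λ₁(G_k, α)`. -/
def PartitionEnergy [Fintype V] [DecidableEq V] (G : SimpleGraph V) [DecidableRel G.Adj]
    (w : V → V → ℝ) {ν : ℕ} (P : V → Fin ν) (O : Finset (V × V)) (α : V × V → ℝ) : ℝ :=
  ⨆ k : Fin ν, lam1Block (paramMatrix G w P O α) P k

/-- `(P, α)` is an equipartition: all the first block eigenvalues agree. -/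
def IsEquipartition [Fintype V] [DecidableEq V] (G : SimpleGraph V) [DecidableRel G.Adj]
    (w : V → V → ℝ) {ν : ℕ} (P : V → Fin ν) (O : Finset (V × V)) (α : V × V → ℝ) : Prop :=
  ∀ k l : Fin ν, lam1Block (paramMatrix G w P O α) P k = lam1Block (paramMatrix G w P O α) P l


open Classical in
/-- The signature `σ^Γ` associated to a set of edges `Γ`: `-1` on `Γ`, `+1` elsewhere. -/
def sgnOfEdgeSet (Γ : Set (Sym2 V)) (i j : V) : ℝ :=
  if s(i, j) ∈ Γ then -1 else 1

/-- Two signatures on `G` are switching equivalent. -/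
def SwitchingEquiv (G : SimpleGraph V) (σ σ' : V → V → ℝ) : Prop :=
  ∃ τ : V → ℝ, (∀ v, τ v = 1 ∨ τ v = -1) ∧
    ∀ i j, G.Adj i j → σ' i j = τ i * σ i j * τ j

/-! On each part `V_k` the block of `L^{∂P}(P, α)` has a unit eigenvector for `λ₁(G_k, α)`;
extended by zero these are `ν` orthonormal eigenvectors of the whole (block diagonal) matrix, so
its quadratic form is at most `Λ(P, α) ‖v‖²` on their span. Because `Γ̃ ⊆ ∂P`, the difference
`L^{∂P}(P, α) - L^{Γ̃}` is a sum over boundary edges of `w_ij` times forms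
`α⁻¹ (α x_i ± x_j)² ≥ 0`, so the bound holds for `L^{Γ̃}` as well. Switching by `τ` carries it to
`L^Γ` on a `ν`-dimensional space, and the min-max principle gives `λ_ν(Γ) ≤ Λ(P, α)`. -/

theorem Fintype.sum_eq_sum_subtype_of_eq_zero {α M : Type*} [Fintype α] [AddCommMonoid M]
    {p : α → Prop} [DecidablePred p] {f : α → M}
    (hf : ∀ x, ¬ p x → f x = 0) : ∑ x, f x = ∑ x : Subtype p, f x := by
  rw [← Fintype.sum_subtype_add_sum_subtype p f,
    Finset.sum_eq_zero fun (x : {x // ¬ p x}) _ => hf x x.2, add_zero]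

section Orthonormal

variable [Fintype V] {ι : Type*} [DecidableEq ι]

theorem dotProduct_mul_mul_of_mul_self_eq_one {τ : V → ℝ} (hτ : ∀ x, τ x * τ x = 1)
    (a b : V → ℝ) : (τ * a) ⬝ᵥ (τ * b) = a ⬝ᵥ b :=
  Finset.sum_congr rfl fun x _ => by
    simp only [Pi.mul_apply]
    linear_combination a x * b x * hτ x

/-- Orthonormality for the dot product: `V → ℝ` carries the sup norm, so Mathlib's
`Orthonormal` does not apply. -/
def IsDotOrthonormal (F : ι → V → ℝ) : Prop :=
  ∀ k l, F k ⬝ᵥ F l = if k = l then 1 else 0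

variable {F : ι → V → ℝ}

theorem IsDotOrthonormal.mul {τ : V → ℝ} (hτ : ∀ x, τ x * τ x = 1) (hF : IsDotOrthonormal F) :
    IsDotOrthonormal fun k => τ * F k := fun k l => by
  rw [dotProduct_mul_mul_of_mul_self_eq_one hτ, hF k l]

variable [Fintype ι]

theorem IsDotOrthonormal.sum_smul_dotProduct (hF : IsDotOrthonormal F) (c : ι → ℝ) (l : ι) :
    (∑ k, c k • F k) ⬝ᵥ F l = c l := by
  simp [sum_dotProduct, smul_dotProduct, hF _ l]

theorem IsDotOrthonormal.sum_smul_dotProduct_self (hF : IsDotOrthonormal F) (c : ι → ℝ) :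
    (∑ k, c k • F k) ⬝ᵥ (∑ k, c k • F k) = ∑ k, c k ^ 2 := by
  simp only [dotProduct_sum, dotProduct_smul, smul_eq_mul, hF.sum_smul_dotProduct, sq]

theorem IsDotOrthonormal.dotProduct_mulVec_sum_smul (hF : IsDotOrthonormal F)
    {A : Matrix V V ℝ} {μ : ι → ℝ} (hAF : ∀ k, A *ᵥ F k = μ k • F k) (c : ι → ℝ) :
    (∑ k, c k • F k) ⬝ᵥ (A *ᵥ ∑ k, c k • F k) = ∑ k, μ k * c k ^ 2 := by
  simp only [mulVec_sum, mulVec_smul, hAF, smul_smul, dotProduct_sum, dotProduct_smul,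
    smul_eq_mul, hF.sum_smul_dotProduct]
  exact Finset.sum_congr rfl fun k _ => by ring

theorem IsDotOrthonormal.dotProduct_mulVec_sum_smul_le (hF : IsDotOrthonormal F)
    {M : Matrix V V ℝ} {μ : ι → ℝ} (hMF : ∀ k, M *ᵥ F k = μ k • F k) {Λ : ℝ}
    (hμ : ∀ k, μ k ≤ Λ) (c : ι → ℝ) :
    (∑ k, c k • F k) ⬝ᵥ (M *ᵥ ∑ k, c k • F k) ≤ Λ * ((∑ k, c k • F k) ⬝ᵥ ∑ k, c k • F k) := by
  rw [hF.dotProduct_mulVec_sum_smul hMF, hF.sum_smul_dotProduct_self, Finset.mul_sum]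
  exact Finset.sum_le_sum fun k _ => mul_le_mul_of_nonneg_right (hμ k) (sq_nonneg _)

theorem IsDotOrthonormal.finrank_span (hF : IsDotOrthonormal F) :
    Module.finrank ℝ (Submodule.span ℝ (Set.range F)) = Fintype.card ι :=
  finrank_span_eq_card <| Fintype.linearIndependent_iff.mpr fun c hc l => by
    simpa [hc] using (hF.sum_smul_dotProduct c l).symm

end Orthonormal

namespace Matrix.IsHermitian

variable [Fintype V] [DecidableEq V] {A : Matrix V V ℝ}

theorem isDotOrthonormal_eigenvectorBasis (hA : A.IsHermitian) :
    IsDotOrthonormal fun i => ⇑(hA.eigenvectorBasis i) := by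
  intro i j
  rw [← orthonormal_iff_ite.mp hA.eigenvectorBasis.orthonormal i j,
    EuclideanSpace.inner_eq_star_dotProduct, dotProduct_comm]
  rfl

theorem sum_dotProduct_eigenvectorBasis_smul (hA : A.IsHermitian) (u : V → ℝ) :
    ∑ i, (⇑(hA.eigenvectorBasis i) ⬝ᵥ u) • ⇑(hA.eigenvectorBasis i) = u := by
  have := congrArg WithLp.ofLp (hA.eigenvectorBasis.sum_repr' (WithLp.toLp 2 u))
  simpa [EuclideanSpace.inner_eq_star_dotProduct, dotProduct_comm] using this

theorem dotProduct_mulVec_eq_sum_eigenvalues (hA : A.IsHermitian) (u : V → ℝ) :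
    u ⬝ᵥ (A *ᵥ u) = ∑ i, hA.eigenvalues i * (⇑(hA.eigenvectorBasis i) ⬝ᵥ u) ^ 2 := by
  have := hA.isDotOrthonormal_eigenvectorBasis.dotProduct_mulVec_sum_smul
    hA.mulVec_eigenvectorBasis fun i => ⇑(hA.eigenvectorBasis i) ⬝ᵥ u
  rwa [hA.sum_dotProduct_eigenvectorBasis_smul] at this

theorem dotProduct_self_eq_sum_eigenvectorBasis (hA : A.IsHermitian) (u : V → ℝ) :
    u ⬝ᵥ u = ∑ i, (⇑(hA.eigenvectorBasis i) ⬝ᵥ u) ^ 2 := by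
  have := hA.isDotOrthonormal_eigenvectorBasis.sum_smul_dotProduct_self
    fun i => ⇑(hA.eigenvectorBasis i) ⬝ᵥ u
  rwa [hA.sum_dotProduct_eigenvectorBasis_smul] at this

/-- `V` listed by increasing eigenvalue, in the order used by `nthEigenvalue`. -/
def eigenvalueOrder (hA : A.IsHermitian) : Fin (Fintype.card V) ≃ V :=
  (Tuple.sort fun i => hA.eigenvalues ((Fintype.equivFin V).symm i)).trans
    (Fintype.equivFin V).symm

theorem monotone_eigenvalues_comp_eigenvalueOrder (hA : A.IsHermitian) :
    Monotone (hA.eigenvalues ∘ hA.eigenvalueOrder) :=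
  Tuple.monotone_sort fun i => hA.eigenvalues ((Fintype.equivFin V).symm i)

theorem nthEigenvalue_eq (hA : A.IsHermitian) {n : ℕ} (hn : n - 1 < Fintype.card V) :
    nthEigenvalue A n = hA.eigenvalues (hA.eigenvalueOrder ⟨n - 1, hn⟩) := by
  rw [nthEigenvalue, dif_pos ⟨hA, hn⟩]
  rfl

theorem exists_mulVec_eq_nthEigenvalue_smul (hA : A.IsHermitian) {n : ℕ}
    (hn : n - 1 < Fintype.card V) :
    ∃ u : V → ℝ, u ⬝ᵥ u = 1 ∧ A *ᵥ u = nthEigenvalue A n • u := by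
  refine ⟨_, ?_, hA.nthEigenvalue_eq hn ▸ hA.mulVec_eigenvectorBasis _⟩
  exact (hA.isDotOrthonormal_eigenvectorBasis _ _).trans (if_pos rfl)

/-- The easy half of the Courant–Fischer min-max principle. -/
theorem nthEigenvalue_le_of_dotProduct_mulVec_le (hA : A.IsHermitian) {n : ℕ} (hn : 0 < n)
    {W : Submodule ℝ (V → ℝ)} (hW : n ≤ Module.finrank ℝ W) {Λ : ℝ}
    (hΛ : ∀ u ∈ W, u ⬝ᵥ (A *ᵥ u) ≤ Λ * (u ⬝ᵥ u)) :
    nthEigenvalue A n ≤ Λ := by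
  have hn' : n - 1 < Fintype.card V := by
    have := Submodule.finrank_le W
    rw [Module.finrank_fintype_fun_eq_card] at this
    omega
  set β := hA.eigenvalueOrder
  -- a nonzero `u ∈ W` orthogonal to the eigenvectors of the `n - 1` smallest eigenvalues
  let φ : W →ₗ[ℝ] Fin (n - 1) → ℝ :=
    (Matrix.of fun j x => hA.eigenvectorBasis (β (Fin.castLE hn'.le j)) x).mulVecLin ∘ₗ
      W.subtype
  obtain ⟨⟨u, huW⟩, hu, hu0⟩ := (Submodule.ne_bot_iff _).mp <|
    LinearMap.ker_ne_bot_of_finrank_lt (f := φ) (by simp; omega)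
  set c : V → ℝ := fun i => ⇑(hA.eigenvectorBasis i) ⬝ᵥ u
  have hc : ∀ j : Fin (Fintype.card V), (j : ℕ) < n - 1 → c (β j) = 0 := fun j hj =>
    congrFun (LinearMap.mem_ker.mp hu) ⟨j, hj⟩
  have hupos : 0 < u ⬝ᵥ u := by
    simpa using dotProduct_self_star_pos_iff.mpr fun h => hu0 (Subtype.ext h)
  have key : hA.eigenvalues (β ⟨n - 1, hn'⟩) * (u ⬝ᵥ u) ≤ u ⬝ᵥ (A *ᵥ u) := by
    rw [hA.dotProduct_self_eq_sum_eigenvectorBasis, hA.dotProduct_mulVec_eq_sum_eigenvalues,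
      Finset.mul_sum, ← β.sum_comp, ← β.sum_comp]
    refine Finset.sum_le_sum fun j _ => ?_
    rcases lt_or_ge (j : ℕ) (n - 1) with hj | hj
    · simp [c, hc j hj]
    · exact mul_le_mul_of_nonneg_right
        (hA.monotone_eigenvalues_comp_eigenvalueOrder hj) (sq_nonneg _)
  rw [hA.nthEigenvalue_eq hn']
  exact le_of_mul_le_mul_right (key.trans (hΛ u huW)) hupos

end Matrix.IsHermitian

section Partition

variable [Fintype V] [DecidableEq V] {ν : ℕ} {P : V → Fin ν}

theorem exists_eigenvector_supported_on_part {M : Matrix V V ℝ} (hM : M.IsHermitian)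
    (hblock : ∀ x y, P x ≠ P y → M x y = 0) {k : Fin ν} (hk : ∃ x, P x = k) :
    ∃ u : V → ℝ, (∀ x, P x ≠ k → u x = 0) ∧ u ⬝ᵥ u = 1 ∧ M *ᵥ u = lam1Block M P k • u := by
  obtain ⟨x₀, hx₀⟩ := hk
  have : Nonempty {v // P v = k} := ⟨⟨x₀, hx₀⟩⟩
  obtain ⟨v, hv1, hv⟩ := (hM.submatrix Subtype.val).exists_mulVec_eq_nthEigenvalue_smul
    (n := 1) (by simpa using Fintype.card_pos (α := {v // P v = k}))
  set u : V → ℝ := fun x => if h : P x = k then v ⟨x, h⟩ else 0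
  have hu : ∀ x, P x ≠ k → u x = 0 := fun x h => dif_neg h
  have hsum (f : V → ℝ) : ∑ x, f x * u x = ∑ x : {v // P v = k}, f x * v x := by
    rw [Fintype.sum_eq_sum_subtype_of_eq_zero fun x hx => by rw [hu x hx, mul_zero]]
    exact Finset.sum_congr rfl fun x _ => by simp [u, x.2]
  refine ⟨u, hu, ?_, funext fun x => ?_⟩
  · rw [← hv1]
    exact (hsum u).trans (Finset.sum_congr rfl fun x _ => by simp [u, x.2])
  · by_cases hx : P x = k
    · have := congrFun hv ⟨x, hx⟩
      simp only [mulVec, dotProduct] at this ⊢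
      rw [hsum]
      simpa [u, hx, lam1Block, blockMatrix] using this
    · simp only [Pi.smul_apply, hu x hx, smul_zero]
      exact Finset.sum_eq_zero fun y _ => by
        by_cases hy : P y = k
        · simp only [hblock x y (by rwa [hy]), zero_mul]
        · rw [hu y hy, mul_zero]

theorem exists_isDotOrthonormal_eigenvectors_of_parts {M : Matrix V V ℝ} (hM : M.IsHermitian)
    (hblock : ∀ x y, P x ≠ P y → M x y = 0) (hP : Function.Surjective P) :
    ∃ u : Fin ν → V → ℝ, IsDotOrthonormal u ∧ ∀ k, M *ᵥ u k = lam1Block M P k • u k := by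
  choose u hsupp hnorm heig using fun k => exists_eigenvector_supported_on_part hM hblock (hP k)
  refine ⟨u, fun k l => ?_, heig⟩
  split_ifs with hkl
  · exact hkl ▸ hnorm k
  · refine Finset.sum_eq_zero fun x _ => ?_
    by_cases hx : P x = k
    · rw [hsupp l x (hx ▸ hkl), mul_zero]
    · rw [hsupp k x hx, zero_mul]

end Partition

section EdgeMatrix

variable [DecidableEq V]

/-- `Bmat i j a` with off-diagonal entries `c` in place of `-1`: `L^{∂P}(P, α) - L^σ` is a sum
of these, with `c = σ i j` (`IsBoundaryOrientation.paramMatrix_eq`). -/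
def edgeMatrix (i j : V) (a c : ℝ) : Matrix V V ℝ :=
  Matrix.of fun x y =>
    if x = i ∧ y = i then a
    else if x = j ∧ y = j then a⁻¹
    else if (x = i ∧ y = j) ∨ (x = j ∧ y = i) then c
    else 0

theorem Bmat_eq_edgeMatrix (i j : V) (a : ℝ) : Bmat i j a = edgeMatrix i j a (-1) := rfl

variable {i j : V}

theorem edgeMatrix_eq_sum_single (hij : i ≠ j) (a c : ℝ) :
    edgeMatrix i j a c = single i i a + single j j a⁻¹ + single i j c + single j i c := by
  ext x y
  simp only [edgeMatrix, of_apply, Matrix.add_apply, single_apply]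
  split_ifs <;> grind

theorem edgeMatrix_isHermitian (a c : ℝ) : (edgeMatrix i j a c).IsHermitian :=
  isHermitian_iff_isSymm.mpr <| IsSymm.ext fun x y => by
    simp only [edgeMatrix, of_apply]
    split_ifs <;> grind

theorem edgeMatrix_apply_self (a c c' : ℝ) (x : V) :
    edgeMatrix i j a c x x = edgeMatrix i j a c' x x := by
  simp only [edgeMatrix, of_apply]
  split_ifs <;> grind

theorem edgeMatrix_apply_of_ne (a c : ℝ) {x y : V} (hxy : x ≠ y) :
    edgeMatrix i j a c x y =
      (if (i, j) = (x, y) then c else 0) + if (i, j) = (y, x) then c else 0 := by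
  simp only [edgeMatrix, of_apply]
  split_ifs <;> grind

theorem sum_smul_edgeMatrix_apply_of_ne (O : Finset (V × V)) (w a s : V × V → ℝ)
    {x y : V} (hxy : x ≠ y) :
    (∑ p ∈ O, w p • edgeMatrix p.1 p.2 (a p) (s p)) x y =
      (if (x, y) ∈ O then w (x, y) * s (x, y) else 0) +
        if (y, x) ∈ O then w (y, x) * s (y, x) else 0 := by
  simp only [Matrix.sum_apply, Matrix.smul_apply, edgeMatrix_apply_of_ne _ _ hxy, Prod.mk.eta,
    smul_eq_mul, mul_add, mul_ite, mul_zero, Finset.sum_add_distrib, Finset.sum_ite_eq']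

variable [Fintype V]

theorem dotProduct_edgeMatrix_mulVec (hij : i ≠ j) (a c : ℝ) (v : V → ℝ) :
    v ⬝ᵥ (edgeMatrix i j a c *ᵥ v) = a * v i ^ 2 + a⁻¹ * v j ^ 2 + 2 * c * v i * v j := by
  simp only [edgeMatrix_eq_sum_single hij, add_mulVec, dotProduct_add, single_mulVec_eq,
    dotProduct_smul, dotProduct_single, smul_eq_mul]
  ring

theorem dotProduct_edgeMatrix_mulVec_nonneg (hij : i ≠ j) {a c : ℝ} (ha : 0 < a)
    (hc : c ^ 2 = 1) (v : V → ℝ) : 0 ≤ v ⬝ᵥ (edgeMatrix i j a c *ᵥ v) := by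
  have : v ⬝ᵥ (edgeMatrix i j a c *ᵥ v) = a⁻¹ * (a * v i + c * v j) ^ 2 := by
    rw [dotProduct_edgeMatrix_mulVec hij]
    field_simp
    linear_combination -(v j ^ 2) * hc
  rw [this]
  positivity

end EdgeMatrix

section SignedLaplacian

variable [Fintype V] [DecidableEq V] (G : SimpleGraph V) [DecidableRel G.Adj] {w : V → V → ℝ}

theorem signedLaplacian_isHermitian (hw : ∀ i j, w i j = w j i) {σ : V → V → ℝ}
    (hσ : ∀ i j, σ i j = σ j i) : (signedLaplacian G w σ).IsHermitian :=
  isHermitian_iff_isSymm.mpr <| IsSymm.ext fun x y => by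
    simp only [signedLaplacian, of_apply]
    split_ifs <;> grind [SimpleGraph.adj_symm]

theorem signedLaplacian_apply_of_switch {σ σ' : V → V → ℝ} {τ : V → ℝ}
    (hτ : ∀ v, τ v * τ v = 1) (hσ' : ∀ i j, G.Adj i j → σ' i j = τ i * σ i j * τ j) (x y : V) :
    signedLaplacian G w σ' x y = τ x * signedLaplacian G w σ x y * τ y := by
  simp only [signedLaplacian, of_apply]
  split_ifs with hxy hadj
  · subst hxy
    linear_combination (-∑ k, if G.Adj x k then w x k else 0) * hτ x
  · rw [hσ' x y hadj]
    ring
  · ring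

theorem dotProduct_signedLaplacian_mulVec_of_switch {σ σ' : V → V → ℝ} {τ : V → ℝ}
    (hτ : ∀ v, τ v * τ v = 1) (hσ' : ∀ i j, G.Adj i j → σ' i j = τ i * σ i j * τ j)
    (v : V → ℝ) :
    (τ * v) ⬝ᵥ (signedLaplacian G w σ *ᵥ (τ * v)) = v ⬝ᵥ (signedLaplacian G w σ' *ᵥ v) := by
  simp only [dotProduct, mulVec, signedLaplacian_apply_of_switch G hτ hσ', Finset.mul_sum,
    Pi.mul_apply]
  exact Finset.sum_congr rfl fun x _ => Finset.sum_congr rfl fun y _ => by ring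

end SignedLaplacian

theorem paramMatrix_isHermitian [Fintype V] [DecidableEq V] (G : SimpleGraph V)
    [DecidableRel G.Adj] {w : V → V → ℝ} (hw : ∀ i j, w i j = w j i) {ν : ℕ} (P : V → Fin ν)
    (O : Finset (V × V)) (α : V × V → ℝ) : (paramMatrix G w P O α).IsHermitian :=
  (signedLaplacian_isHermitian G hw fun i j => by simp [partSgn, eq_comm]).add <|
    isHermitian_iff_isSelfAdjoint.mpr <| isSelfAdjoint_sum O fun _ _ =>
      ((edgeMatrix_isHermitian _ _).smul (IsSelfAdjoint.all _)).isSelfAdjoint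

section BoundaryOrientation

variable [DecidableEq V] {G : SimpleGraph V} [DecidableRel G.Adj] {ν : ℕ} {P : V → Fin ν}
  {O : Finset (V × V)}

structure IsBoundaryOrientation (G : SimpleGraph V) (P : V → Fin ν) (O : Finset (V × V)) :
    Prop where
  adj_ne : ∀ p ∈ O, G.Adj p.1 p.2 ∧ P p.1 ≠ P p.2
  mem_iff_swap_notMem : ∀ i j, G.Adj i j → P i ≠ P j → ((i, j) ∈ O ↔ (j, i) ∉ O)

theorem IsBoundaryOrientation.ite_mem_add_ite_swap_mem (hO : IsBoundaryOrientation G P O)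
    {f : V → V → ℝ} (hf : ∀ i j, f i j = f j i) (x y : V) :
    ((if (x, y) ∈ O then f x y else 0) + if (y, x) ∈ O then f y x else 0) =
      if G.Adj x y ∧ P x ≠ P y then f x y else 0 := by
  by_cases hb : G.Adj x y ∧ P x ≠ P y
  · have := hO.mem_iff_swap_notMem x y hb.1 hb.2
    rw [if_pos hb, hf y x]
    by_cases hxy : (x, y) ∈ O <;> simp_all
  · have hxy : (x, y) ∉ O := fun h => hb (hO.adj_ne _ h)
    have hyx : (y, x) ∉ O := fun h => hb ⟨(hO.adj_ne _ h).1.symm, (hO.adj_ne _ h).2.symm⟩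
    simp [hb, hxy, hyx]

variable [Fintype V] {w : V → V → ℝ}

theorem IsBoundaryOrientation.paramMatrix_eq (hO : IsBoundaryOrientation G P O)
    (hw : ∀ i j, w i j = w j i) {σ : V → V → ℝ} (hσ : ∀ i j, σ i j = σ j i)
    (hσP : ∀ i j, P i = P j → σ i j = 1) (α : V × V → ℝ) :
    paramMatrix G w P O α =
      signedLaplacian G w σ + ∑ p ∈ O, w p.1 p.2 • edgeMatrix p.1 p.2 (α p) (σ p.1 p.2) := by
  ext x y
  rcases eq_or_ne x y with rfl | hxy
  · simp only [paramMatrix, Matrix.add_apply, Matrix.sum_apply, Matrix.smul_apply,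
      Bmat_eq_edgeMatrix]
    congr 1
    · simp [signedLaplacian]
    · exact Finset.sum_congr rfl fun p _ => by rw [edgeMatrix_apply_self _ _ (σ p.1 p.2)]
  · simp only [paramMatrix, Matrix.add_apply, Bmat_eq_edgeMatrix,
      sum_smul_edgeMatrix_apply_of_ne _ _ _ _ hxy,
      hO.ite_mem_add_ite_swap_mem (f := fun i j => w i j * -1) (by simp [hw]),
      hO.ite_mem_add_ite_swap_mem (f := fun i j => w i j * σ i j) (by simp [hw, hσ])]
    simp only [signedLaplacian, of_apply, if_neg hxy, partSgn]
    split_ifs <;> simp_all [mul_comm]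

theorem IsBoundaryOrientation.paramMatrix_apply_of_ne (hO : IsBoundaryOrientation G P O)
    (hw : ∀ i j, w i j = w j i) (α : V × V → ℝ) {x y : V} (hP : P x ≠ P y) :
    paramMatrix G w P O α x y = 0 := by
  have hxy : x ≠ y := ne_of_apply_ne P hP
  rw [hO.paramMatrix_eq hw (σ := fun _ _ => 1) (fun _ _ => rfl) (fun _ _ _ => rfl),
    Matrix.add_apply, sum_smul_edgeMatrix_apply_of_ne _ _ _ _ hxy,
    hO.ite_mem_add_ite_swap_mem (f := fun i j => w i j * 1) (by simp [hw])]
  simp only [signedLaplacian, of_apply, if_neg hxy]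
  split_ifs <;> simp_all

theorem IsBoundaryOrientation.dotProduct_signedLaplacian_mulVec_le
    (hO : IsBoundaryOrientation G P O) (hw : ∀ i j, w i j = w j i)
    (hwpos : ∀ i j, G.Adj i j → 0 < w i j) {σ : V → V → ℝ} (hσ : ∀ i j, σ i j = σ j i)
    (hσP : ∀ i j, P i = P j → σ i j = 1) (hσ2 : ∀ i j, σ i j ^ 2 = 1) {α : V × V → ℝ}
    (hα : ∀ p ∈ O, 0 < α p) (v : V → ℝ) :
    v ⬝ᵥ (signedLaplacian G w σ *ᵥ v) ≤ v ⬝ᵥ (paramMatrix G w P O α *ᵥ v) := by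
  rw [hO.paramMatrix_eq hw hσ hσP, add_mulVec, dotProduct_add, le_add_iff_nonneg_right,
    sum_mulVec, dotProduct_sum]
  refine Finset.sum_nonneg fun p hp => ?_
  rw [smul_mulVec, dotProduct_smul, smul_eq_mul]
  have hadj := (hO.adj_ne p hp).1
  exact mul_nonneg (hwpos _ _ hadj).le
    (dotProduct_edgeMatrix_mulVec_nonneg hadj.ne (hα p hp) (hσ2 _ _) v)

end BoundaryOrientation

theorem sgnOfEdgeSet_comm (Γ : Set (Sym2 V)) (i j : V) :
    sgnOfEdgeSet Γ i j = sgnOfEdgeSet Γ j i := by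
  rw [sgnOfEdgeSet, sgnOfEdgeSet, Sym2.eq_swap]

theorem sgnOfEdgeSet_sq (Γ : Set (Sym2 V)) (i j : V) : sgnOfEdgeSet Γ i j ^ 2 = 1 := by
  unfold sgnOfEdgeSet
  split_ifs <;> norm_num

theorem sgnOfEdgeSet_eq_one_of_part_eq {ν : ℕ} {P : V → Fin ν} {G : SimpleGraph V}
    {Γ : Set (Sym2 V)} (hΓ : ∀ e ∈ Γ, ∃ i j, e = s(i, j) ∧ G.Adj i j ∧ P i ≠ P j) {x y : V}
    (hxy : P x = P y) : sgnOfEdgeSet Γ x y = 1 := by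
  refine if_neg fun hmem => ?_
  obtain ⟨i, j, he, -, hij⟩ := hΓ _ hmem
  rcases Sym2.eq_iff.mp he with ⟨rfl, rfl⟩ | ⟨rfl, rfl⟩
  exacts [hij hxy, hij hxy.symm]

theorem stmt16_general [Fintype V] [DecidableEq V] (G : SimpleGraph V) [DecidableRel G.Adj]
    (w : V → V → ℝ)
    (hwsymm : ∀ i j, w i j = w j i) (hwpos : ∀ i j, G.Adj i j → 0 < w i j)
    (Γ : Set (Sym2 V))
    {ν : ℕ} (P : V → Fin ν) (hPsurj : Function.Surjective P)
    (O : Finset (V × V))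
    (hO : ∀ p ∈ O, G.Adj p.1 p.2 ∧ P p.1 ≠ P p.2)
    (hOorient : ∀ i j, G.Adj i j → P i ≠ P j → ((i, j) ∈ O ↔ (j, i) ∉ O))
    (Γt : Set (Sym2 V))
    (hΓt : ∀ e ∈ Γt, ∃ i j, e = s(i, j) ∧ G.Adj i j ∧ P i ≠ P j)
    (hswitch : SwitchingEquiv G (sgnOfEdgeSet Γ) (sgnOfEdgeSet Γt)) :
    ∀ α : V × V → ℝ, (∀ p ∈ O, 0 < α p) →
      nthEigenvalue (signedLaplacian G w (sgnOfEdgeSet Γ)) ν ≤ PartitionEnergy G w P O α := by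
  intro α hα
  rcases Nat.eq_zero_or_pos ν with rfl | hν
  · have : IsEmpty V := ⟨fun v => (P v).elim0⟩
    simp [nthEigenvalue, PartitionEnergy]
  have hbd : IsBoundaryOrientation G P O := ⟨hO, hOorient⟩
  obtain ⟨u, hu, hMu⟩ := exists_isDotOrthonormal_eigenvectors_of_parts
    (paramMatrix_isHermitian G hwsymm P O α) (fun _ _ => hbd.paramMatrix_apply_of_ne hwsymm α)
    hPsurj
  obtain ⟨τ, hτ, hτσ⟩ := hswitch
  have hτ2 : ∀ v, τ v * τ v = 1 := fun v => by rcases hτ v with h | h <;> simp [h]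
  have hL := signedLaplacian_isHermitian G hwsymm (sgnOfEdgeSet_comm Γ)
  refine hL.nthEigenvalue_le_of_dotProduct_mulVec_le hν
    (W := Submodule.span ℝ (Set.range (τ * u ·))) (by simp [(hu.mul hτ2).finrank_span])
    fun x hx => ?_
  obtain ⟨c, rfl⟩ := (Submodule.mem_span_range_iff_exists_fun ℝ).mp hx
  have hcu : ∑ k, c k • (τ * u k) = τ * ∑ k, c k • u k := by
    simp [Finset.mul_sum]
  rw [hcu, dotProduct_signedLaplacian_mulVec_of_switch G hτ2 hτσ,
    dotProduct_mul_mul_of_mul_self_eq_one hτ2]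
  exact (hbd.dotProduct_signedLaplacian_mulVec_le hwsymm hwpos (sgnOfEdgeSet_comm Γt)
    (fun _ _ => sgnOfEdgeSet_eq_one_of_part_eq hΓt) (sgnOfEdgeSet_sq Γt) hα _).trans
    (hu.dotProduct_mulVec_sum_smul_le hMu (le_ciSup (Finite.bddAbove_range _)) c)

/-- lower bound for the partition energy. If `Γ̃ ⊆ ∂P` is such that
`σ^Γ` is switching equivalent to `σ^{Γ̃}`, then for every positive parameter vector `α`,
the `ν`-th smallest eigenvalue of `L^Γ` is at most `Λ(P, α)`. -/
theorem stmt16 [Fintype V] [DecidableEq V] (G : SimpleGraph V) [DecidableRel G.Adj]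
    (hGconn : G.Connected) (w : V → V → ℝ)
    (hwsymm : ∀ i j, w i j = w j i) (hwpos : ∀ i j, G.Adj i j → 0 < w i j)
    (hw0 : ∀ i j, ¬ G.Adj i j → w i j = 0)
    (Γ : Set (Sym2 V)) (hΓ : Γ ⊆ G.edgeSet)
    {ν : ℕ} (P : V → Fin ν) (hPsurj : Function.Surjective P)
    (hPconn : ∀ k : Fin ν, (G.induce {v | P v = k}).Connected)
    (O : Finset (V × V))
    (hO : ∀ p ∈ O, G.Adj p.1 p.2 ∧ P p.1 ≠ P p.2)
    (hOorient : ∀ i j, G.Adj i j → P i ≠ P j → ((i, j) ∈ O ↔ (j, i) ∉ O))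
    (Γt : Set (Sym2 V))
    (hΓt : ∀ e ∈ Γt, ∃ i j, e = s(i, j) ∧ G.Adj i j ∧ P i ≠ P j)
    (hswitch : SwitchingEquiv G (sgnOfEdgeSet Γ) (sgnOfEdgeSet Γt)) :
    ∀ α : V × V → ℝ, (∀ p ∈ O, 0 < α p) →
      nthEigenvalue (signedLaplacian G w (sgnOfEdgeSet Γ)) ν ≤ PartitionEnergy G w P O α :=
  stmt16_general G w hwsymm hwpos Γ P hPsurj O hO hOorient Γt hΓt hswitch
end
end

section
/- Let P be a partition of G with boundary ∂P, let Γ̃ ⊆ ∂P, and let α ∈ ℝ^{∂P} have all entries positive. Let A be the symmetric V×V matrix with A_ij = A_ji = 2w_ij for (i,j) ∈ ∂P ∖ Γ̃ and all other entries 0, and let B(α) = Σ_{(i,j)∈∂P} w_ij B_ij(α_ij). Then L^{Γ̃} = L^{∂P}(P,α) − A − B(α), and for every u : V → ℝ, ⟨u, (A + B(α)) u⟩ = Σ_{(i,j)∈∂P∖Γ̃} w_ij α_ij (u_i + u_j/α_ij)² + Σ_{(i,j)∈Γ̃} w_ij α_ij (u_i − u_j/α_ij)² ≥ 0; in particular A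 + B(α) is positive semidefinite. -/
open Matrix Finset

noncomputable section

variable {V : Type*}

/-- The symmetric matrix `A` with entries `2 w_ij` on the (unordered) boundary edges not in
`Γ̃` (here `T ⊆ O` records the oriented edges of `Γ̃`) and `0` elsewhere. -/
def Amat [DecidableEq V] (w : V → V → ℝ) (O T : Finset (V × V)) : Matrix V V ℝ :=
  Matrix.of fun x y =>
    if (x, y) ∈ O \ T ∨ (y, x) ∈ O \ T then 2 * w x y else 0

/-- The signature equal to `-1` on the (unordered) edges recorded by the oriented edge set
`T` and `+1` elsewhere. -/
def sgnOfOriented [DecidableEq V] (T : Finset (V × V)) (i j : V) : ℝ :=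
  if (i, j) ∈ T ∨ (j, i) ∈ T then -1 else 1

/-! On an edge of `∂P` inside `Γ̃` the signatures `σ^{∂P}` and `σ^{Γ̃}` agree, and on one outside
`Γ̃` they differ by `2`; this difference is `A`. The quadratic form of `w_ij B_ij(α)` is
`w_ij α (u_i - u_j/α)²`, and the term `4 w_ij u_i u_j` that `A` contributes on an edge outside `Γ̃`
turns it into `w_ij α (u_i + u_j/α)²`. -/

lemma Fintype.sum_sum_ite_mem {α β M : Type*} [Fintype α] [Fintype β] [DecidableEq α]
    [DecidableEq β] [AddCommMonoid M] (S : Finset (α × β)) (f : α → β → M) :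
    ∑ x, ∑ y, (if (x, y) ∈ S then f x y else 0) = ∑ p ∈ S, f p.1 p.2 := by
  rw [← Fintype.sum_prod_type', Finset.sum_ite_mem, Finset.univ_inter]

section DecidableEq

variable [DecidableEq V]

lemma sgnOfOriented_sub_partSgn {ν : ℕ} {P : V → Fin ν} {O T : Finset (V × V)}
    (hO : ∀ p ∈ O, P p.1 ≠ P p.2) (hT : T ⊆ O) {i j : V}
    (hij : P i ≠ P j → ((i, j) ∈ O ↔ (j, i) ∉ O)) :
    sgnOfOriented T i j - partSgn P i j = if (i, j) ∈ O \ T ∨ (j, i) ∈ O \ T then 2 else 0 := by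
  have notMem_T {p : V × V} (hp : p ∉ O) : p ∉ T := fun h => hp (hT h)
  by_cases hP : P i = P j
  · have h1 : (i, j) ∉ O := fun h => hO _ h hP
    have h2 : (j, i) ∉ O := fun h => hO _ h hP.symm
    simp [sgnOfOriented, partSgn, hP, h1, h2, notMem_T h1, notMem_T h2]
  by_cases h1 : (i, j) ∈ O
  · have h2 : (j, i) ∉ O := (hij hP).mp h1
    by_cases h3 : (i, j) ∈ T <;> norm_num [sgnOfOriented, partSgn, hP, h1, h2, h3, notMem_T h2]
  · have h2 : (j, i) ∈ O := not_not.mp (mt (hij hP).mpr h1)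
    by_cases h3 : (j, i) ∈ T <;> norm_num [sgnOfOriented, partSgn, hP, h1, h2, h3, notMem_T h1]

lemma Bmat_eq_sub_single {i j : V} (hij : i ≠ j) (a : ℝ) :
    Bmat i j a = single i i a + single j j a⁻¹ - single i j 1 - single j i 1 := by
  ext x y
  by_cases hx : x = i <;> by_cases hy : y = i <;> by_cases hx' : x = j <;> by_cases hy' : y = j <;>
    simp_all [Bmat, single, eq_comm]

lemma Bmat_isSymm (i j : V) (a : ℝ) : (Bmat i j a).IsSymm := by
  ext x y
  simp only [transpose_apply, Bmat, of_apply]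
  grind

lemma Amat_isSymm {w : V → V → ℝ} (hw : ∀ i j, w i j = w j i) (O T : Finset (V × V)) :
    (Amat w O T).IsSymm := by
  ext x y
  simp [Amat, or_comm, hw x y]

lemma isHermitian_Amat_add_sum_Bmat {w : V → V → ℝ} (hw : ∀ i j, w i j = w j i)
    (O T : Finset (V × V)) (α : V × V → ℝ) :
    (Amat w O T + ∑ p ∈ O, w p.1 p.2 • Bmat p.1 p.2 (α p)).IsHermitian := by
  refine isHermitian_iff_isSymm.2 ((Amat_isSymm hw O T).add (IsSymm.ext fun i j => ?_))
  simp only [Matrix.sum_apply, Matrix.smul_apply, (Bmat_isSymm _ _ _).apply]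

variable [Fintype V]

lemma signedLaplacian_sub_signedLaplacian (G : SimpleGraph V) [DecidableRel G.Adj]
    (w σ τ : V → V → ℝ) :
    signedLaplacian G w τ - signedLaplacian G w σ =
      of fun i j => if i ≠ j ∧ G.Adj i j then (σ i j - τ i j) * w i j else 0 := by
  ext i j
  by_cases hij : i = j <;> by_cases hadj : G.Adj i j <;> simp [signedLaplacian, hij, hadj]
  ring

lemma Amat_eq_signedLaplacian_sub (G : SimpleGraph V) [DecidableRel G.Adj] (w : V → V → ℝ)
    {ν : ℕ} (P : V → Fin ν) {O T : Finset (V × V)}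
    (hO : ∀ p ∈ O, G.Adj p.1 p.2 ∧ P p.1 ≠ P p.2)
    (hOorient : ∀ i j, G.Adj i j → P i ≠ P j → ((i, j) ∈ O ↔ (j, i) ∉ O)) (hT : T ⊆ O) :
    Amat w O T = signedLaplacian G w (partSgn P) - signedLaplacian G w (sgnOfOriented T) := by
  rw [signedLaplacian_sub_signedLaplacian]
  ext i j
  simp only [Amat, of_apply]
  by_cases hij : i ≠ j ∧ G.Adj i j
  · rw [if_pos hij, sgnOfOriented_sub_partSgn (fun p hp => (hO p hp).2) hT
      (hOorient i j hij.2)]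
    split_ifs <;> ring
  · have h1 : (i, j) ∉ O := fun h => hij ⟨(hO _ h).1.ne, (hO _ h).1⟩
    have h2 : (j, i) ∉ O := fun h => hij ⟨(hO _ h).1.ne.symm, (hO _ h).1.symm⟩
    simp [hij, h1, h2]

lemma dotProduct_single_mulVec (i j : V) (c : ℝ) (u : V → ℝ) :
    u ⬝ᵥ single i j c *ᵥ u = c * u i * u j := by
  rw [single_mulVec_eq, dotProduct_smul, dotProduct_single_one, smul_eq_mul]
  ring

lemma dotProduct_Bmat_mulVec {i j : V} (hij : i ≠ j) {a : ℝ} (ha : a ≠ 0) (u : V → ℝ) :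
    u ⬝ᵥ Bmat i j a *ᵥ u = a * (u i - u j / a) ^ 2 := by
  simp only [Bmat_eq_sub_single hij, sub_mulVec, add_mulVec, dotProduct_sub, dotProduct_add,
    dotProduct_single_mulVec]
  field_simp
  ring

lemma dotProduct_Amat_mulVec {w : V → V → ℝ} (hw : ∀ i j, w i j = w j i)
    {O T : Finset (V × V)} (hdisj : ∀ p ∈ O \ T, p.swap ∉ O \ T) (u : V → ℝ) :
    u ⬝ᵥ Amat w O T *ᵥ u = ∑ p ∈ O \ T, 4 * w p.1 p.2 * u p.1 * u p.2 := by
  have entry (x y : V) : u x * (Amat w O T x y * u y) =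
      (if (x, y) ∈ O \ T then u x * (2 * w x y) * u y else 0) +
        (if (y, x) ∈ O \ T then u y * (2 * w y x) * u x else 0) := by
    simp only [Amat, of_apply]
    by_cases h1 : (x, y) ∈ O \ T
    · rw [if_pos (Or.inl h1), if_pos h1, if_neg (show (y, x) ∉ O \ T from hdisj _ h1)]
      ring
    by_cases h2 : (y, x) ∈ O \ T
    · rw [if_pos (Or.inr h2), if_neg h1, if_pos h2, hw x y]
      ring
    · rw [if_neg (not_or.2 ⟨h1, h2⟩), if_neg h1, if_neg h2]
      ring
  simp only [dotProduct, mulVec, Finset.mul_sum, entry, Finset.sum_add_distrib]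
  rw [Finset.sum_comm (f := fun x y => if (y, x) ∈ O \ T then _ else _),
    Fintype.sum_sum_ite_mem, ← Finset.sum_add_distrib]
  exact Finset.sum_congr rfl fun p _ => by ring

lemma dotProduct_Amat_add_sum_Bmat_mulVec {w : V → V → ℝ} (hw : ∀ i j, w i j = w j i)
    {O T : Finset (V × V)} (hT : T ⊆ O) (hdisj : ∀ p ∈ O \ T, p.swap ∉ O \ T)
    (hne : ∀ p ∈ O, p.1 ≠ p.2) {α : V × V → ℝ} (hα : ∀ p ∈ O, α p ≠ 0) (u : V → ℝ) :
    u ⬝ᵥ (Amat w O T + ∑ p ∈ O, w p.1 p.2 • Bmat p.1 p.2 (α p)) *ᵥ u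
      = (∑ p ∈ O \ T, w p.1 p.2 * α p * (u p.1 + u p.2 / α p) ^ 2)
          + ∑ p ∈ T, w p.1 p.2 * α p * (u p.1 - u p.2 / α p) ^ 2 := by
  have hB : u ⬝ᵥ (∑ p ∈ O, w p.1 p.2 • Bmat p.1 p.2 (α p)) *ᵥ u
      = ∑ p ∈ O, w p.1 p.2 * α p * (u p.1 - u p.2 / α p) ^ 2 := by
    rw [sum_mulVec, dotProduct_sum]
    refine Finset.sum_congr rfl fun p hp => ?_
    rw [smul_mulVec, dotProduct_smul, dotProduct_Bmat_mulVec (hne p hp) (hα p hp), smul_eq_mul,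
      mul_assoc]
  rw [add_mulVec, dotProduct_add, dotProduct_Amat_mulVec hw hdisj, hB, ← Finset.sum_sdiff hT,
    ← add_assoc, ← Finset.sum_add_distrib]
  congr 1
  refine Finset.sum_congr rfl fun p hp => ?_
  have := hα p (Finset.sdiff_subset hp)
  field_simp
  ring

end DecidableEq

theorem stmt19_general [Fintype V] [DecidableEq V] (G : SimpleGraph V) [DecidableRel G.Adj]
    (w : V → V → ℝ)
    (hwsymm : ∀ i j, w i j = w j i) (hwpos : ∀ i j, G.Adj i j → 0 < w i j)
    {ν : ℕ} (P : V → Fin ν)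
    (O : Finset (V × V))
    (hO : ∀ p ∈ O, G.Adj p.1 p.2 ∧ P p.1 ≠ P p.2)
    (hOorient : ∀ i j, G.Adj i j → P i ≠ P j → ((i, j) ∈ O ↔ (j, i) ∉ O))
    (T : Finset (V × V)) (hT : T ⊆ O)
    (α : V × V → ℝ) (hαpos : ∀ p ∈ O, 0 < α p) :
    signedLaplacian G w (sgnOfOriented T)
        = paramMatrix G w P O α - Amat w O T
          - ∑ p ∈ O, w p.1 p.2 • Bmat p.1 p.2 (α p) ∧
    (∀ u : V → ℝ,
      dotProduct u ((Amat w O T + ∑ p ∈ O, w p.1 p.2 • Bmat p.1 p.2 (α p)).mulVec u)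
        = (∑ p ∈ O \ T, w p.1 p.2 * α p * (u p.1 + u p.2 / α p) ^ 2)
          + ∑ p ∈ T, w p.1 p.2 * α p * (u p.1 - u p.2 / α p) ^ 2) ∧
    (Amat w O T + ∑ p ∈ O, w p.1 p.2 • Bmat p.1 p.2 (α p)).PosSemidef := by
  have hdisj : ∀ p ∈ O \ T, p.swap ∉ O \ T := fun p hp hswap =>
    have hpO := (Finset.mem_sdiff.1 hp).1
    (hOorient p.1 p.2 (hO p hpO).1 (hO p hpO).2).mp hpO (Finset.mem_sdiff.1 hswap).1
  have hquad := dotProduct_Amat_add_sum_Bmat_mulVec hwsymm hT hdisj (fun p hp => (hO p hp).1.ne)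
    (fun p hp => (hαpos p hp).ne')
  refine ⟨?_, hquad, .of_dotProduct_mulVec_nonneg (isHermitian_Amat_add_sum_Bmat hwsymm O T α) fun u => ?_⟩
  · rw [paramMatrix, Amat_eq_signedLaplacian_sub G w P hO hOorient hT]
    abel
  · have term_nonneg {p : V × V} (hp : p ∈ O) (x : ℝ) : 0 ≤ w p.1 p.2 * α p * x ^ 2 := by
      have := hwpos _ _ (hO p hp).1
      have := hαpos p hp
      positivity
    rw [star_trivial, hquad]
    exact add_nonneg (Finset.sum_nonneg fun p hp => term_nonneg (Finset.sdiff_subset hp) _)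
      (Finset.sum_nonneg fun p hp => term_nonneg (hT hp) _)

/-- With `Γ̃ ⊆ ∂P` (recorded by `T ⊆ O`) and positive `α`, one has
`L^{Γ̃} = L^{∂P}(P,α) − A − B(α)`, and the quadratic form of `A + B(α)` is the stated sum
of squares; in particular `A + B(α)` is positive semidefinite. -/
theorem stmt19 [Fintype V] [DecidableEq V] (G : SimpleGraph V) [DecidableRel G.Adj]
    (hGconn : G.Connected) (w : V → V → ℝ)
    (hwsymm : ∀ i j, w i j = w j i) (hwpos : ∀ i j, G.Adj i j → 0 < w i j)
    (hw0 : ∀ i j, ¬ G.Adj i j → w i j = 0)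
    {ν : ℕ} (P : V → Fin ν) (hPsurj : Function.Surjective P)
    (hPconn : ∀ k : Fin ν, (G.induce {v | P v = k}).Connected)
    (O : Finset (V × V))
    (hO : ∀ p ∈ O, G.Adj p.1 p.2 ∧ P p.1 ≠ P p.2)
    (hOorient : ∀ i j, G.Adj i j → P i ≠ P j → ((i, j) ∈ O ↔ (j, i) ∉ O))
    (T : Finset (V × V)) (hT : T ⊆ O)
    (α : V × V → ℝ) (hαpos : ∀ p ∈ O, 0 < α p) :
    signedLaplacian G w (sgnOfOriented T)
        = paramMatrix G w P O α - Amat w O T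
          - ∑ p ∈ O, w p.1 p.2 • Bmat p.1 p.2 (α p) ∧
    (∀ u : V → ℝ,
      dotProduct u ((Amat w O T + ∑ p ∈ O, w p.1 p.2 • Bmat p.1 p.2 (α p)).mulVec u)
        = (∑ p ∈ O \ T, w p.1 p.2 * α p * (u p.1 + u p.2 / α p) ^ 2)
          + ∑ p ∈ T, w p.1 p.2 * α p * (u p.1 - u p.2 / α p) ^ 2) ∧
    (Amat w O T + ∑ p ∈ O, w p.1 p.2 • Bmat p.1 p.2 (α p)).PosSemidef :=
  stmt19_general G w hwsymm hwpos P O hO hOorient T hT α hαpos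

end
end
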